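/- For the inverse Sibuya process and t_1 ≤ t_2 in ℕ_0, E[L_α(t_1) L_α(t_2)] = ∑_{ℓ=1}^{t_1} binom(ℓ+α-1, ℓ) [binom(t_1-ℓ+α, t_1-ℓ) + binom(t_2-ℓ+α, t_2-ℓ) - 1]. -/

import Mathlib

/-!
Since `Z i ≥ 1` almost surely, `L t = #{n ∈ [1, t] | S n ≤ t}`, so `E[L t₁ L t₂]` is the double
sum of `P(S m ≤ t₁, S n ≤ t₂)`. For `n ≤ m` this is `P(S m ≤ t₁)`; for `n > m` it factors through
the independent pair `(S m, S n - S m)`, whose laws are convolution powers of the step law `p`.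
After summation only the renewal sequence `u ℓ = ∑ₘ P(S m = ℓ)`, its partial sums `U`, and the
identity `∑ₘ (m + 1) P(S m = ℓ) = (u ∗ u) ℓ` remain, giving
`∑_{ℓ=1}^{t₁} u ℓ (U (t₁ - ℓ) + U (t₂ - ℓ) - 1)` for every step law with `p 0 = 0`.
For the Sibuya law the Chu–Vandermonde identity `binom(α, ·) ∗ binom(-α, ·) = δ₀` shows that
`u ℓ = binom(ℓ + α - 1, ℓ)` solves the renewal equation, and the hockey-stick identity gives
`U t = binom(t + α, t)`.
-/

open MeasureTheory ProbabilityTheory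

/-- Generalized binomial coefficient `binom(x, k) = x(x-1)⋯(x-k+1)/k!` for real `x`. -/
noncomputable def gbinom (x : ℝ) (k : ℕ) : ℝ :=
  (∏ i ∈ Finset.range k, (x - i)) / (Nat.factorial k)

/-- Sibuya(α) probability mass function. -/
noncomputable def sibuya (α : ℝ) (k : ℕ) : ℝ :=
  if k = 0 then 0 else (-1 : ℝ) ^ (k - 1) * gbinom α k

open Finset

theorem sum_range_succ_eq_add_sum_Icc {M : Type*} [AddCommMonoid M] (f : ℕ → M) (n : ℕ) :
    ∑ i ∈ range (n + 1), f i = f 0 + ∑ i ∈ Icc 1 n, f i := by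
  have hIcc : Icc 1 n = Ioc 0 n := Icc_add_one_left_eq_Ioc 0 n
  rw [Nat.range_succ_eq_Icc_zero, ← add_sum_Ioc_eq_sum_Icc (Nat.zero_le n), hIcc]

theorem sum_Ioc_sub_eq_sum_Icc {M : Type*} [AddCommMonoid M] (f : ℕ → M) {m N : ℕ} (h : m ≤ N) :
    ∑ n ∈ Ioc m N, f (n - m) = ∑ k ∈ Icc 1 (N - m), f k := by
  have := sum_Ico_add_right_sub_eq (f := f) 1 (N - m + 1) m
  rwa [show N - m + 1 + m = N + 1 by omega, add_comm 1 m, Ico_add_one_add_one_eq_Ioc,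
    Ico_add_one_right_eq_Icc] at this

theorem sum_range_sum_mul_sub {R : Type*} [NonUnitalNonAssocSemiring R] (a b : ℕ → R) (t : ℕ) :
    ∑ ℓ ∈ range (t + 1), ∑ i ∈ range (ℓ + 1), a i * b (ℓ - i)
      = ∑ i ∈ range (t + 1), a i * ∑ k ∈ range (t - i + 1), b k := by
  rw [sum_comm' (t' := range (t + 1)) (s' := fun i => Ico i (t + 1))
    (by intro ℓ i; simp only [mem_range, mem_Ico]; omega)]
  refine sum_congr rfl fun i hi => ?_
  rw [mul_sum, sum_Ico_eq_sum_range, show t + 1 - i = t - i + 1 by simp at hi; omega]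
  simp

noncomputable def convPow (p : ℕ → ℝ) : ℕ → ℕ → ℝ
  | 0, k => if k = 0 then 1 else 0
  | n + 1, k => ∑ j ∈ range (k + 1), p j * convPow p n (k - j)

noncomputable def convPowCdf (p : ℕ → ℝ) (n t : ℕ) : ℝ := ∑ ℓ ∈ range (t + 1), convPow p n ℓ

/-- The sum over `m` is cut at `m = ℓ`, which loses nothing only when `p 0 = 0`. -/
noncomputable def renewalSeq (p : ℕ → ℝ) (ℓ : ℕ) : ℝ := ∑ m ∈ range (ℓ + 1), convPow p m ℓ

noncomputable def renewalFun (p : ℕ → ℝ) (t : ℕ) : ℝ := ∑ ℓ ∈ range (t + 1), renewalSeq p ℓ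

section Renewal

variable {p : ℕ → ℝ}

theorem convPow_zero_left (k : ℕ) : convPow p 0 k = if k = 0 then 1 else 0 := rfl

theorem convPow_eq_zero_of_lt (hp0 : p 0 = 0) {n k : ℕ} (h : k < n) : convPow p n k = 0 := by
  induction n generalizing k with
  | zero => omega
  | succ n ih =>
    refine sum_eq_zero fun j hj => ?_
    rcases j.eq_zero_or_pos with rfl | hj0
    · rw [hp0, zero_mul]
    · rw [ih (by simp at hj; omega), mul_zero]

theorem sum_range_mul_convPow_of_le (hp0 : p 0 = 0) (g : ℕ → ℝ) {ℓ N : ℕ} (h : ℓ ≤ N) :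
    ∑ m ∈ range (N + 1), g m * convPow p m ℓ = ∑ m ∈ range (ℓ + 1), g m * convPow p m ℓ :=
  (sum_subset (range_subset_range.2 (by omega)) fun m _ hm => by
    rw [convPow_eq_zero_of_lt hp0 (by simp at hm; omega), mul_zero]).symm

theorem sum_range_convPow_of_le (hp0 : p 0 = 0) {ℓ N : ℕ} (h : ℓ ≤ N) :
    ∑ m ∈ range (N + 1), convPow p m ℓ = renewalSeq p ℓ := by
  simpa [renewalSeq] using sum_range_mul_convPow_of_le hp0 (fun _ => 1) h

-- decomposition according to the first jump
theorem sum_range_mul_convPow_succ (hp0 : p 0 = 0) (g : ℕ → ℝ) (ℓ : ℕ) :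
    ∑ m ∈ range (ℓ + 2), g m * convPow p m (ℓ + 1)
      = ∑ j ∈ range (ℓ + 1), p (j + 1) * ∑ m ∈ range (ℓ + 1), g (m + 1) * convPow p m (ℓ - j) := by
  have first_jump : ∀ m, convPow p (m + 1) (ℓ + 1)
      = ∑ j ∈ range (ℓ + 1), p (j + 1) * convPow p m (ℓ - j) := fun m => by
    rw [convPow, sum_range_succ', hp0, zero_mul, add_zero]
    simp
  rw [sum_range_succ', convPow_zero_left, if_neg (by omega), mul_zero, add_zero]
  simp_rw [first_jump, mul_sum]
  rw [sum_comm]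
  exact sum_congr rfl fun j _ => sum_congr rfl fun m _ => by ring

theorem renewalSeq_zero : renewalSeq p 0 = 1 := by simp [renewalSeq, convPow_zero_left]

theorem renewalSeq_succ (hp0 : p 0 = 0) (ℓ : ℕ) :
    renewalSeq p (ℓ + 1) = ∑ j ∈ range (ℓ + 1), p (j + 1) * renewalSeq p (ℓ - j) := by
  have h := sum_range_mul_convPow_succ hp0 (fun _ => 1) ℓ
  simp only [one_mul] at h
  rw [renewalSeq, h]
  exact sum_congr rfl fun j _ => by rw [sum_range_convPow_of_le hp0 (by omega)]

theorem eq_of_renewal_equation {f g h : ℕ → ℝ} (h0 : f 0 = g 0)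
    (hf : ∀ ℓ, f (ℓ + 1) = ∑ j ∈ range (ℓ + 1), p (j + 1) * f (ℓ - j) + h ℓ)
    (hg : ∀ ℓ, g (ℓ + 1) = ∑ j ∈ range (ℓ + 1), p (j + 1) * g (ℓ - j) + h ℓ) : f = g := by
  funext ℓ
  induction ℓ using Nat.strong_induction_on with
  | _ ℓ ih =>
    rcases ℓ with _ | ℓ
    · exact h0
    · rw [hf, hg]
      congr 1
      exact sum_congr rfl fun j hj => by rw [ih (ℓ - j) (by omega)]

theorem sum_range_succ_mul_convPow (hp0 : p 0 = 0) (ℓ : ℕ) :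
    ∑ m ∈ range (ℓ + 1), ((m : ℝ) + 1) * convPow p m ℓ
      = ∑ i ∈ range (ℓ + 1), renewalSeq p i * renewalSeq p (ℓ - i) := by
  -- both sides solve the renewal equation with inhomogeneous term `u (ℓ + 1)`
  revert ℓ
  refine congrFun (eq_of_renewal_equation (p := p) (h := fun ℓ => renewalSeq p (ℓ + 1))
    ?_ (fun ℓ => ?_) (fun ℓ => ?_))
  · simp [convPow_zero_left, renewalSeq_zero]
  · rw [sum_range_mul_convPow_succ hp0, renewalSeq_succ hp0, ← sum_add_distrib]
    refine sum_congr rfl fun j _ => ?_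
    rw [← mul_add, ← sum_range_mul_convPow_of_le hp0 _ (Nat.sub_le ℓ j),
      ← sum_range_convPow_of_le hp0 (Nat.sub_le ℓ j), ← sum_add_distrib]
    push_cast
    exact congrArg _ (sum_congr rfl fun m _ => by ring)
  · rw [sum_range_succ, Nat.sub_self, renewalSeq_zero, mul_one, add_left_inj]
    have hsucc : ∀ i ∈ range (ℓ + 1), renewalSeq p i * renewalSeq p (ℓ + 1 - i)
        = ∑ j ∈ range (ℓ - i + 1), renewalSeq p i * (p (j + 1) * renewalSeq p (ℓ - i - j)) :=
      fun i hi => by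
        rw [show ℓ + 1 - i = ℓ - i + 1 by simp at hi; omega, renewalSeq_succ hp0, mul_sum]
    rw [sum_congr rfl hsucc, sum_comm' (t' := range (ℓ + 1)) (s' := fun j => range (ℓ - j + 1))
      (by intro i j; simp only [mem_range]; omega)]
    refine sum_congr rfl fun j _ => ?_
    rw [mul_sum]
    exact sum_congr rfl fun i _ => by rw [Nat.sub_right_comm]; ring

theorem sum_range_sum_convPow_mul (hp0 : p 0 = 0) (F : ℕ → ℝ) {t N : ℕ} (h : t ≤ N) :
    ∑ m ∈ range (N + 1), ∑ ℓ ∈ range (t + 1), convPow p m ℓ * F ℓ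
      = ∑ ℓ ∈ range (t + 1), renewalSeq p ℓ * F ℓ := by
  rw [sum_comm]
  refine sum_congr rfl fun ℓ hℓ => ?_
  rw [← sum_mul, sum_range_convPow_of_le hp0 (by simp at hℓ; omega)]

theorem sum_Icc_sum_convPow_mul (hp0 : p 0 = 0) (F : ℕ → ℝ) {t N : ℕ} (h : t ≤ N) :
    ∑ m ∈ Icc 1 N, ∑ ℓ ∈ range (t + 1), convPow p m ℓ * F ℓ
      = ∑ ℓ ∈ Icc 1 t, renewalSeq p ℓ * F ℓ := by
  have h := sum_range_sum_convPow_mul hp0 F h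
  rw [sum_range_succ_eq_add_sum_Icc, sum_range_succ_eq_add_sum_Icc (fun ℓ => renewalSeq p ℓ * F ℓ),
    renewalSeq_zero] at h
  simpa [convPow_zero_left] using h

theorem sum_Icc_convPowCdf (hp0 : p 0 = 0) {t N : ℕ} (h : t ≤ N) :
    ∑ k ∈ Icc 1 N, convPowCdf p k t = renewalFun p t - 1 := by
  have h := sum_Icc_sum_convPow_mul hp0 (fun _ => 1) h
  simp only [mul_one] at h
  rw [renewalFun, sum_range_succ_eq_add_sum_Icc, renewalSeq_zero, ← h]
  simp [convPowCdf]

theorem sum_Icc_natCast_mul_convPowCdf (hp0 : p 0 = 0) (t : ℕ) :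
    ∑ m ∈ Icc 1 t, (m : ℝ) * convPowCdf p m t
      = ∑ ℓ ∈ Icc 1 t, renewalSeq p ℓ * renewalFun p (t - ℓ) := by
  have hsucc : ∑ m ∈ range (t + 1), ((m : ℝ) + 1) * convPowCdf p m t
      = ∑ ℓ ∈ range (t + 1), renewalSeq p ℓ * renewalFun p (t - ℓ) := by
    simp only [renewalFun]
    rw [← sum_range_sum_mul_sub]
    simp only [convPowCdf, mul_sum]
    rw [sum_comm]
    refine sum_congr rfl fun ℓ hℓ => ?_
    rw [sum_range_mul_convPow_of_le hp0 _ (by simp at hℓ; omega), sum_range_succ_mul_convPow hp0]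
  have hone : ∑ m ∈ range (t + 1), convPowCdf p m t = renewalFun p t := by
    simpa [convPowCdf, renewalFun] using sum_range_sum_convPow_mul hp0 (fun _ => 1) le_rfl
  simp only [add_mul, one_mul, sum_add_distrib, hone] at hsucc
  rw [sum_range_succ_eq_add_sum_Icc, sum_range_succ_eq_add_sum_Icc (fun ℓ => _ * _),
    renewalSeq_zero] at hsucc
  simp only [CharP.cast_eq_zero, zero_mul, zero_add, one_mul, Nat.sub_zero] at hsucc
  linarith

end Renewal

theorem gbinom_eq_choose (x : ℝ) (k : ℕ) : gbinom x k = Ring.choose x k := by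
  rw [Ring.choose_eq_smul, ← Polynomial.aeval_eq_smeval, Polynomial.aeval_def,
    Polynomial.eval₂_eq_eval_map, descPochhammer_map, descPochhammer_eval_eq_prod_range,
    gbinom, smul_eq_mul, div_eq_inv_mul]

theorem sibuya_zero (α : ℝ) : sibuya α 0 = 0 := if_pos rfl

theorem sibuya_succ (α : ℝ) (j : ℕ) : sibuya α (j + 1) = (-1) ^ j * Ring.choose α (j + 1) := by
  rw [sibuya, if_neg j.succ_ne_zero, Nat.add_sub_cancel, gbinom_eq_choose]

theorem Ring.multichoose_eq_neg_one_pow_mul_choose_neg {R : Type*} [CommRing R] [BinomialRing R]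
    (r : R) (n : ℕ) : Ring.multichoose r n = (-1) ^ n * Ring.choose (-r) n := by
  simp [Ring.choose_neg', Units.smul_def, Int.negOnePow_def, zsmul_eq_mul, ← mul_assoc, ← mul_pow]

theorem multichoose_succ_eq_sum_sibuya_mul (α : ℝ) (ℓ : ℕ) :
    Ring.multichoose α (ℓ + 1)
      = ∑ j ∈ range (ℓ + 1), sibuya α (j + 1) * Ring.multichoose α (ℓ - j) := by
  have vandermonde : ∑ i ∈ range (ℓ + 2), Ring.choose α i * Ring.choose (-α) (ℓ + 1 - i) = 0 := by
    rw [← Nat.sum_antidiagonal_eq_sum_range_succ (fun i j => Ring.choose α i * Ring.choose (-α) j),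
      ← Ring.add_choose_eq _ (Commute.all _ _), add_neg_cancel, Ring.choose_zero_succ]
  rw [sum_range_succ', Ring.choose_zero_right, one_mul, Nat.sub_zero] at vandermonde
  have hterm : ∀ j ∈ range (ℓ + 1), sibuya α (j + 1) * Ring.multichoose α (ℓ - j)
      = (-1) ^ ℓ * (Ring.choose α (j + 1) * Ring.choose (-α) (ℓ + 1 - (j + 1))) := fun j hj => by
    have hsign : (-1 : ℝ) ^ ℓ = (-1) ^ j * (-1) ^ (ℓ - j) := by
      rw [← pow_add, Nat.add_sub_cancel' (mem_range_succ_iff.1 hj)]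
    rw [sibuya_succ, Ring.multichoose_eq_neg_one_pow_mul_choose_neg, Nat.add_sub_add_right, hsign]
    ring
  rw [sum_congr rfl hterm, ← mul_sum, eq_neg_of_add_eq_zero_left vandermonde,
    Ring.multichoose_eq_neg_one_pow_mul_choose_neg, pow_succ]
  ring

theorem Ring.sum_range_multichoose {R : Type*} [NonAssocSemiring R] [Pow R ℕ] [NatPowAssoc R]
    [BinomialRing R] (r : R) (n : ℕ) :
    ∑ k ∈ range (n + 1), Ring.multichoose r k = Ring.multichoose (r + 1) n := by
  induction n with
  | zero => simp
  | succ n ih => rw [sum_range_succ, ih, Ring.multichoose_succ_succ, add_comm]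

theorem renewalSeq_sibuya (α : ℝ) : renewalSeq (sibuya α) = Ring.multichoose α :=
  eq_of_renewal_equation (h := 0) (by rw [renewalSeq_zero, Ring.multichoose_zero_right])
    (fun ℓ => by rw [renewalSeq_succ (sibuya_zero α), Pi.zero_apply, add_zero])
    (fun ℓ => by rw [multichoose_succ_eq_sum_sibuya_mul, Pi.zero_apply, add_zero])

theorem renewalSeq_sibuya_eq_gbinom (α : ℝ) (ℓ : ℕ) :
    renewalSeq (sibuya α) ℓ = gbinom (ℓ + α - 1) ℓ := by
  rw [renewalSeq_sibuya, gbinom_eq_choose, Ring.multichoose_eq, add_comm α]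

theorem renewalFun_sibuya_eq_gbinom (α : ℝ) (n : ℕ) :
    renewalFun (sibuya α) n = gbinom (n + α) n := by
  rw [renewalFun, renewalSeq_sibuya, Ring.sum_range_multichoose, gbinom_eq_choose,
    Ring.multichoose_eq]
  congr 1
  ring

noncomputable def renewalCount {Ω : Type*} (Z : ℕ → Ω → ℕ) (t : ℕ) (ω : Ω) : ℕ :=
  sSup {n | ∑ j ∈ range n, Z j ω ≤ t}

theorem sSup_setOf_sum_range_le_eq_card {z : ℕ → ℕ} (hz : ∀ i, 0 < z i) (t : ℕ) :
    sSup {n | ∑ j ∈ range n, z j ≤ t} = #{n ∈ Icc 1 t | ∑ j ∈ range n, z j ≤ t} := by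
  set K := {n | ∑ j ∈ range n, z j ≤ t}
  have hmono : ∀ {a b}, a ≤ b → ∑ j ∈ range a, z j ≤ ∑ j ∈ range b, z j :=
    fun h => sum_le_sum_of_subset (range_subset_range.2 h)
  have hlin : ∀ n, n ≤ ∑ j ∈ range n, z j := fun n => by
    simpa using card_nsmul_le_sum (range n) z 1 fun j _ => hz j
  have hbdd : BddAbove K := ⟨t, fun n hn => (hlin n).trans hn⟩
  have hmem : sSup K ∈ K := Nat.sSup_mem ⟨0, by simp [K]⟩ hbdd
  have hfilter : {n ∈ Icc 1 t | ∑ j ∈ range n, z j ≤ t} = Icc 1 (sSup K) := by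
    ext n
    simp only [mem_filter, mem_Icc]
    constructor
    · rintro ⟨⟨h1, -⟩, hn⟩
      exact ⟨h1, le_csSup hbdd hn⟩
    · rintro ⟨h1, hn⟩
      have hn' : ∑ j ∈ range n, z j ≤ t := (hmono hn).trans hmem
      exact ⟨⟨h1, (hlin n).trans hn'⟩, hn'⟩
  rw [hfilter, Nat.card_Icc, Nat.add_sub_cancel]

section Probability

variable {Ω : Type*} [MeasurableSpace Ω] {μ : Measure Ω}

theorem ProbabilityTheory.IndepFun.measureReal_biUnion_preimage_inter [IsFiniteMeasure μ]
    {X Y : Ω → ℕ} (h : IndepFun X Y μ) (hX : Measurable X) (hY : Measurable Y) (s : Finset ℕ)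
    (B : ℕ → Set ℕ) :
    μ.real (⋃ i ∈ s, X ⁻¹' {i} ∩ Y ⁻¹' B i) = ∑ i ∈ s, μ.real (X ⁻¹' {i}) * μ.real (Y ⁻¹' B i) := by
  rw [measureReal_biUnion_finset _ fun i _ => (hX (measurableSet_singleton i)).inter
    (hY MeasurableSet.of_discrete)]
  · refine sum_congr rfl fun i _ => ?_
    rw [measureReal_def, h.measure_inter_preimage_eq_mul _ _ (measurableSet_singleton i)
      MeasurableSet.of_discrete, ENNReal.toReal_mul, measureReal_def, measureReal_def]
  · intro i _ j _ hij
    exact Disjoint.mono Set.inter_subset_left Set.inter_subset_left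
      ((Set.disjoint_singleton.2 hij).preimage X)

variable {Z : ℕ → Ω → ℕ}

theorem ProbabilityTheory.iIndepFun.indepFun_finsetSum_finsetSum (hindep : iIndepFun Z μ)
    (hmeas : ∀ i, Measurable (Z i)) {s t : Finset ℕ} (hst : Disjoint s t) :
    IndepFun (∑ j ∈ s, Z j) (∑ j ∈ t, Z j) μ := by
  have hsum : ∀ u : Finset ℕ, Measurable fun v : u → ℕ => ∑ i, v i :=
    fun u => Finset.measurable_sum _ fun i _ => measurable_pi_apply i
  convert (hindep.indepFun_finset s t hst hmeas).comp (hsum s) (hsum t) using 1 <;>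
  · funext ω
    simp [sum_attach _ (fun j => Z j ω)]

variable [IsProbabilityMeasure μ] {p : ℕ → ℝ}

theorem measureReal_sum_eq_convPow (hindep : iIndepFun Z μ) (hmeas : ∀ i, Measurable (Z i))
    (hlaw : ∀ i k, μ.real {ω | Z i ω = k} = p k) (s : Finset ℕ) (k : ℕ) :
    μ.real {ω | ∑ j ∈ s, Z j ω = k} = convPow p #s k := by
  induction s using Finset.induction_on generalizing k with
  | empty => by_cases hk : k = 0 <;> simp [hk, convPow, eq_comm]
  | insert i s hi ih =>
    have hset : {ω | ∑ j ∈ insert i s, Z j ω = k}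
        = ⋃ j ∈ range (k + 1), Z i ⁻¹' {j} ∩ (∑ j ∈ s, Z j) ⁻¹' {k - j} := by
      ext ω
      simp only [Set.mem_ofPred_eq, sum_insert hi, Set.mem_iUnion, Set.mem_inter_iff,
        Set.mem_preimage, Set.mem_singleton_iff, mem_range, Finset.sum_apply, exists_prop]
      constructor
      · intro h
        exact ⟨Z i ω, by omega, rfl, by omega⟩
      · rintro ⟨j, hj, rfl, h⟩
        omega
    rw [hset, (hindep.indepFun_finsetSum_of_notMem hmeas hi).symm.measureReal_biUnion_preimage_inter
      (hmeas i) (by fun_prop), card_insert_of_notMem hi, convPow]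
    refine sum_congr rfl fun j _ => ?_
    rw [← hlaw i j, ← ih]
    simp [Set.preimage, Finset.sum_apply]

theorem measureReal_sum_le_eq_convPowCdf (hindep : iIndepFun Z μ) (hmeas : ∀ i, Measurable (Z i))
    (hlaw : ∀ i k, μ.real {ω | Z i ω = k} = p k) (s : Finset ℕ) (t : ℕ) :
    μ.real {ω | ∑ j ∈ s, Z j ω ≤ t} = convPowCdf p #s t := by
  have hset : {ω | ∑ j ∈ s, Z j ω ≤ t} = (∑ j ∈ s, Z j) ⁻¹' ↑(range (t + 1)) := by
    ext ω
    simp [Finset.sum_apply]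
  rw [hset, ← sum_measureReal_preimage_singleton _ fun _ _ => MeasurableSet.of_discrete.preimage
    (by fun_prop)]
  refine sum_congr rfl fun ℓ _ => ?_
  rw [← measureReal_sum_eq_convPow hindep hmeas hlaw]
  simp [Set.preimage, Finset.sum_apply]

theorem measureReal_sum_range_le_inter (hindep : iIndepFun Z μ) (hmeas : ∀ i, Measurable (Z i))
    (hlaw : ∀ i k, μ.real {ω | Z i ω = k} = p k) {m n s t : ℕ} (hmn : m ≤ n) (hst : s ≤ t) :
    μ.real ({ω | ∑ j ∈ range m, Z j ω ≤ s} ∩ {ω | ∑ j ∈ range n, Z j ω ≤ t})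
      = ∑ ℓ ∈ range (s + 1), convPow p m ℓ * convPowCdf p (n - m) (t - ℓ) := by
  have hset : {ω | ∑ j ∈ range m, Z j ω ≤ s} ∩ {ω | ∑ j ∈ range n, Z j ω ≤ t}
      = ⋃ ℓ ∈ range (s + 1), (∑ j ∈ range m, Z j) ⁻¹' {ℓ}
          ∩ (∑ j ∈ Ico m n, Z j) ⁻¹' Set.Iic (t - ℓ) := by
    ext ω
    have hsplit := sum_range_add_sum_Ico (fun j => Z j ω) hmn
    simp only [Set.mem_inter_iff, Set.mem_ofPred_eq, Set.mem_iUnion, Set.mem_preimage,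
      Set.mem_singleton_iff, Set.mem_Iic, mem_range, Finset.sum_apply, exists_prop]
    constructor
    · rintro ⟨h1, h2⟩
      exact ⟨_, by omega, rfl, by omega⟩
    · rintro ⟨ℓ, hℓ, rfl, h⟩
      omega
  have hindep' := hindep.indepFun_finsetSum_finsetSum hmeas (s := range m) (t := Ico m n)
    (disjoint_left.2 fun j hj hj' => by simp at hj hj'; omega)
  rw [hset, hindep'.measureReal_biUnion_preimage_inter (by fun_prop) (by fun_prop)]
  refine sum_congr rfl fun ℓ _ => ?_
  have hX := measureReal_sum_eq_convPow hindep hmeas hlaw (range m) ℓ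
  have hY := measureReal_sum_le_eq_convPowCdf hindep hmeas hlaw (Ico m n) (t - ℓ)
  rw [card_range] at hX
  rw [Nat.card_Ico] at hY
  rw [← hX, ← hY]
  simp [Set.preimage, Finset.sum_apply]

theorem ae_renewalCount_eq_sum_indicator (hlaw : ∀ i k, μ.real {ω | Z i ω = k} = p k)
    (hp0 : p 0 = 0) :
    ∀ᵐ ω ∂μ, ∀ t, (renewalCount Z t ω : ℝ)
      = ∑ n ∈ Icc 1 t, {ω | ∑ j ∈ range n, Z j ω ≤ t}.indicator 1 ω := by
  have hpos : ∀ᵐ ω ∂μ, ∀ i, 0 < Z i ω := ae_all_iff.2 fun i => by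
    have hnull : μ {ω | Z i ω = 0} = 0 := (measureReal_eq_zero_iff).1 (by rw [hlaw, hp0])
    exact ae_iff.2 (by simpa using hnull)
  filter_upwards [hpos] with ω hω t
  rw [renewalCount, sSup_setOf_sum_range_le_eq_card hω, natCast_card_filter]
  simp [Set.indicator]

theorem integral_renewalCount_mul_eq_sum (hmeas : ∀ i, Measurable (Z i))
    (hlaw : ∀ i k, μ.real {ω | Z i ω = k} = p k) (hp0 : p 0 = 0) (t₁ t₂ : ℕ) :
    ∫ ω, (renewalCount Z t₁ ω : ℝ) * renewalCount Z t₂ ω ∂μ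
      = ∑ m ∈ Icc 1 t₁, ∑ n ∈ Icc 1 t₂,
          μ.real ({ω | ∑ j ∈ range m, Z j ω ≤ t₁} ∩ {ω | ∑ j ∈ range n, Z j ω ≤ t₂}) := by
  have hE : ∀ n t, MeasurableSet {ω | ∑ j ∈ range n, Z j ω ≤ t} := fun n t =>
    measurableSet_le (by fun_prop) measurable_const
  have hint : ∀ m n t t', Integrable
      (({ω | ∑ j ∈ range m, Z j ω ≤ t} ∩ {ω | ∑ j ∈ range n, Z j ω ≤ t'}).indicator 1) μ :=
    fun m n t t' => (integrable_const (1 : ℝ)).indicator ((hE m t).inter (hE n t'))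
  calc ∫ ω, (renewalCount Z t₁ ω : ℝ) * renewalCount Z t₂ ω ∂μ
      = ∫ ω, ∑ m ∈ Icc 1 t₁, ∑ n ∈ Icc 1 t₂,
          ({ω | ∑ j ∈ range m, Z j ω ≤ t₁} ∩ {ω | ∑ j ∈ range n, Z j ω ≤ t₂}).indicator 1 ω ∂μ := by
        refine integral_congr_ae ?_
        filter_upwards [ae_renewalCount_eq_sum_indicator hlaw hp0] with ω hω
        simp only [hω, sum_mul_sum, Set.inter_indicator_one, Pi.mul_apply]
    _ = _ := by
        rw [integral_finsetSum _ fun m _ => integrable_finsetSum _ fun n _ => hint m n t₁ t₂]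
        refine sum_congr rfl fun m _ => ?_
        rw [integral_finsetSum _ fun n _ => hint m n t₁ t₂]
        exact sum_congr rfl fun n _ => integral_indicator_one ((hE m t₁).inter (hE n t₂))

theorem sum_measureReal_inter_eq (hindep : iIndepFun Z μ) (hmeas : ∀ i, Measurable (Z i))
    (hlaw : ∀ i k, μ.real {ω | Z i ω = k} = p k) (hp0 : p 0 = 0) {m t₁ t₂ : ℕ} (hm : m ≤ t₁)
    (ht : t₁ ≤ t₂) :
    ∑ n ∈ Icc 1 t₂, μ.real ({ω | ∑ j ∈ range m, Z j ω ≤ t₁} ∩ {ω | ∑ j ∈ range n, Z j ω ≤ t₂})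
      = m * convPowCdf p m t₁
        + ∑ ℓ ∈ range (t₁ + 1), convPow p m ℓ * (renewalFun p (t₂ - ℓ) - 1) := by
  have hIcc : Icc 1 t₂ = Ioc 0 t₂ := Icc_add_one_left_eq_Ioc 0 t₂
  rw [hIcc, ← sum_Ioc_consecutive _ (Nat.zero_le m) (hm.trans ht)]
  congr 1
  · have hsub : ∀ n ∈ Ioc 0 m, {ω | ∑ j ∈ range m, Z j ω ≤ t₁} ⊆ {ω | ∑ j ∈ range n, Z j ω ≤ t₂} :=
      fun n hn ω hω => le_trans (sum_le_sum_of_subset (range_subset_range.2 (mem_Ioc.1 hn).2))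
        (hω.trans ht)
    rw [sum_congr rfl fun n hn => by rw [Set.inter_eq_left.2 (hsub n hn)], sum_const,
      Nat.card_Ioc, Nat.sub_zero, nsmul_eq_mul, measureReal_sum_le_eq_convPowCdf hindep hmeas hlaw,
      card_range]
  · rw [sum_congr rfl fun n hn => measureReal_sum_range_le_inter hindep hmeas hlaw
      (mem_Ioc.1 hn).1.le ht, sum_comm]
    refine sum_congr rfl fun ℓ hℓ => ?_
    rw [← mul_sum, sum_Ioc_sub_eq_sum_Icc (fun k => convPowCdf p k (t₂ - ℓ)) (hm.trans ht)]
    rcases lt_or_ge ℓ m with hℓm | hmℓ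
    · rw [convPow_eq_zero_of_lt hp0 hℓm, zero_mul, zero_mul]
    · rw [sum_Icc_convPowCdf hp0 (by omega)]

theorem integral_renewalCount_mul_renewalCount (hindep : iIndepFun Z μ)
    (hmeas : ∀ i, Measurable (Z i)) (hlaw : ∀ i k, μ.real {ω | Z i ω = k} = p k) (hp0 : p 0 = 0)
    {t₁ t₂ : ℕ} (ht : t₁ ≤ t₂) :
    ∫ ω, (renewalCount Z t₁ ω : ℝ) * renewalCount Z t₂ ω ∂μ
      = ∑ ℓ ∈ Icc 1 t₁, renewalSeq p ℓ * (renewalFun p (t₁ - ℓ) + renewalFun p (t₂ - ℓ) - 1) := by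
  rw [integral_renewalCount_mul_eq_sum hmeas hlaw hp0, sum_congr rfl fun m hm =>
    sum_measureReal_inter_eq hindep hmeas hlaw hp0 (mem_Icc.1 hm).2 ht, sum_add_distrib,
    sum_Icc_natCast_mul_convPowCdf hp0, sum_Icc_sum_convPow_mul hp0 _ le_rfl, ← sum_add_distrib]
  exact sum_congr rfl fun ℓ _ => by ring

end Probability

theorem sibuya_inverse_cross_moment_general
    {Ω : Type*} [MeasurableSpace Ω] (μ : Measure Ω) [IsProbabilityMeasure μ]
    (α : ℝ)
    (Z : ℕ → Ω → ℕ) (hmeas : ∀ i, Measurable (Z i))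
    (hindep : iIndepFun Z μ)
    (hlaw : ∀ i k, (μ {ω | Z i ω = k}).toReal = sibuya α k)
    (S : ℕ → Ω → ℕ) (hS : ∀ n ω, S n ω = ∑ j ∈ Finset.range n, Z j ω)
    (L : ℕ → Ω → ℕ) (hL : ∀ t ω, L t ω = sSup {n : ℕ | S n ω ≤ t})
    (t₁ t₂ : ℕ) (ht : t₁ ≤ t₂) :
    ∫ ω, (L t₁ ω : ℝ) * (L t₂ ω : ℝ) ∂μ
      = ∑ ℓ ∈ Finset.Icc 1 t₁, gbinom ((ℓ : ℝ) + α - 1) ℓ *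
          (gbinom (((t₁ - ℓ : ℕ) : ℝ) + α) (t₁ - ℓ)
            + gbinom (((t₂ - ℓ : ℕ) : ℝ) + α) (t₂ - ℓ) - 1) := by
  have hL' : L = renewalCount Z := by
    funext t ω
    simp only [hL, hS, renewalCount]
  subst hL'
  rw [integral_renewalCount_mul_renewalCount hindep hmeas hlaw (sibuya_zero α) ht]
  refine sum_congr rfl fun ℓ _ => ?_
  simp only [renewalSeq_sibuya_eq_gbinom, renewalFun_sibuya_eq_gbinom]

/-- For the inverse Sibuya process and `t₁ ≤ t₂`,
`E[L_α(t₁) L_α(t₂)] = ∑_{ℓ=1}^{t₁} binom(ℓ+α-1, ℓ)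
  [binom(t₁-ℓ+α, t₁-ℓ) + binom(t₂-ℓ+α, t₂-ℓ) - 1]`. -/
theorem sibuya_inverse_cross_moment
    {Ω : Type*} [MeasurableSpace Ω] (μ : Measure Ω) [IsProbabilityMeasure μ]
    (α : ℝ) (hα : α ∈ Set.Ioo (0 : ℝ) 1)
    (Z : ℕ → Ω → ℕ) (hmeas : ∀ i, Measurable (Z i))
    (hindep : iIndepFun Z μ)
    (hlaw : ∀ i k, (μ {ω | Z i ω = k}).toReal = sibuya α k)
    (S : ℕ → Ω → ℕ) (hS : ∀ n ω, S n ω = ∑ j ∈ Finset.range n, Z j ω)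
    (L : ℕ → Ω → ℕ) (hL : ∀ t ω, L t ω = sSup {n : ℕ | S n ω ≤ t})
    (t₁ t₂ : ℕ) (ht : t₁ ≤ t₂) :
    ∫ ω, (L t₁ ω : ℝ) * (L t₂ ω : ℝ) ∂μ
      = ∑ ℓ ∈ Finset.Icc 1 t₁, gbinom ((ℓ : ℝ) + α - 1) ℓ *
          (gbinom (((t₁ - ℓ : ℕ) : ℝ) + α) (t₁ - ℓ)
            + gbinom (((t₂ - ℓ : ℕ) : ℝ) + α) (t₂ - ℓ) - 1) :=
  sibuya_inverse_cross_moment_general μ α Z hmeas hindep hlaw S hS L hL t₁ t₂ ht
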